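/- For any number of clusters K ≥ 2, differential privacy parameters ε, δ ∈ (0,1), and Δ ∈ ℕ with Δ ≥ 1, let p = e^{−0.2ε/Δ} and r = 3(1 + log(1/δ)). Consider the mechanism that maps a histogram R ∈ ℕ^K to the distribution of (R₁ + Z₁, …, R_K + Z_K), where Z₁, …, Z_K are independent with Z_b ∼ NB(r, p). Let R, R' ∈ ℕ^K be two histograms that agree on all coordinates except two distinct clusters b ≠ b', where R_b = R'_b + Δ and R'_{b'} = R_{b'} + Δ (one client moves all Δ of its queries from cluster b to cluster b'). Then the mechanism is (2ε, 2δ)-differentially private with respect to (R, R'). -/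

import Mathlib

/-!
Each coordinate carries independent `NB(r, p)` noise, whose consecutive mass ratios are
`q (k + 1) / q k = p (r + k) / (k + 1)`. Moving `Δ` queries away from cluster `b` therefore costs
a factor at most `p^{-Δ} = e^{0.2ε}` there, and moving them into cluster `b'` costs at most
`exp (Δ (r - 1) / (k + 1)) ≤ e^ε` as soon as the noise `k` on `b'` is at least `k₀ = ⌈Δ r / ε⌉`.
The remaining event, noise below `Δ + k₀` on `b'`, has mass at most `δ`: tilting `NB(r, p)` to
`NB(r, p³)` bounds it by `p^{-2(Δ + k₀)} (1 + p + p²)^{-r} ≤ e^{0.8 - 0.35 r} ≤ δ`.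
-/

open scoped ENNReal

/-- Probability mass function of the negative binomial distribution `NB(r, p)`:
`Pr(X = k) = (Γ(k+r)/(k!·Γ(r))) · p^k · (1−p)^r`. -/
noncomputable def nbPMF (r p : ℝ) (k : ℕ) : ℝ :=
  (Real.Gamma (k + r) / (Nat.factorial k * Real.Gamma r)) * p ^ k *
    Real.rpow (1 - p) r

/-- Mass function of the noisy-histogram mechanism on input histogram `R`: the
distribution of `(R₁ + Z₁, …, R_K + Z_K)` with the `Z_b ∼ NB(r,p)` independent. -/
noncomputable def noisyHist (K : ℕ) (r p : ℝ) (R : Fin K → ℕ) (v : Fin K → ℕ) : ℝ≥0∞ :=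
  ∏ b, if R b ≤ v b then ENNReal.ofReal (nbPMF r p (v b - R b)) else 0

/-- The probability mass assigned by a distribution to a subset `S`. -/
noncomputable def setProb {Ω : Type*} (ν : Ω → ℝ≥0∞) (S : Set Ω) : ℝ≥0∞ :=
  ∑' x : S, ν x

open Finset Polynomial

theorem Real.Gamma_nat_add_eq_mul_ascPochhammer {r : ℝ} (hr : 0 < r) (k : ℕ) :
    Real.Gamma (k + r) = Real.Gamma r * (ascPochhammer ℝ k).eval r := by
  induction k with
  | zero => simp
  | succ k ih =>
    rw [Nat.cast_succ, add_right_comm, Real.Gamma_add_one (by positivity), ih,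
      ascPochhammer_succ_right, eval_mul]
    simp only [eval_add, eval_X, eval_natCast]
    ring

theorem nbPMF_eq_multichoose {r : ℝ} (hr : 0 < r) (p : ℝ) (k : ℕ) :
    nbPMF r p k = Ring.multichoose r k * p ^ k * (1 - p) ^ r := by
  have hfac : (k.factorial : ℝ) * Ring.multichoose r k = (ascPochhammer ℝ k).eval r := by
    rw [← nsmul_eq_mul, Ring.factorial_nsmul_multichoose_eq_ascPochhammer,
      ascPochhammer_smeval_eq_eval]
  have hG := (Real.Gamma_pos_of_pos hr).ne'
  rw [nbPMF, Real.Gamma_nat_add_eq_mul_ascPochhammer hr, ← hfac]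
  field_simp
  rfl

theorem hasSum_nbPMF {r p : ℝ} (hr : 0 < r) (hp : |p| < 1) : HasSum (nbPMF r p ·) 1 := by
  have hsum := (Real.one_div_one_sub_rpow_hasFPowerSeriesOnBall_zero r).hasSum
    (y := p) (by simpa [Real.enorm_eq_ofReal_abs] using hp)
  simp only [FormalMultilinearSeries.ofScalars_apply_eq, smul_eq_mul, zero_add] at hsum
  have h1p : 0 < 1 - p := by linarith [le_abs_self p]
  have hcoeff : (nbPMF r p ·) = fun k : ℕ => Ring.choose (r + k - 1) k * p ^ k * (1 - p) ^ r := by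
    ext k
    rw [nbPMF_eq_multichoose hr, Ring.multichoose_eq]
  rw [hcoeff]
  simpa [(Real.rpow_pos_of_pos h1p r).ne'] using hsum.mul_right ((1 - p) ^ r)

theorem nbPMF_nonneg {r p : ℝ} (hr : 0 < r) (hp0 : 0 ≤ p) (hp1 : p ≤ 1) (k : ℕ) :
    0 ≤ nbPMF r p k := by
  have := Real.Gamma_pos_of_pos (show 0 < k + r by positivity)
  have := Real.Gamma_pos_of_pos hr
  have : 0 ≤ (1 - p) ^ r := Real.rpow_nonneg (by linarith) r
  unfold nbPMF
  positivity

theorem nbPMF_succ {r : ℝ} (hr : 0 < r) (p : ℝ) (k : ℕ) :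
    nbPMF r p (k + 1) = p * ((r + k) / (k + 1)) * nbPMF r p k := by
  have hG := (Real.Gamma_pos_of_pos hr).ne'
  rw [nbPMF, nbPMF, Nat.cast_succ, add_right_comm, Real.Gamma_add_one (by positivity),
    Nat.factorial_succ]
  push_cast
  field_simp
  ring

theorem pow_mul_nbPMF_le_nbPMF_add {r p : ℝ} (hr : 1 ≤ r) (hp0 : 0 ≤ p) (hp1 : p ≤ 1)
    (k d : ℕ) : p ^ d * nbPMF r p k ≤ nbPMF r p (k + d) := by
  induction d with
  | zero => simp
  | succ d ih =>
    have hratio : 1 ≤ (r + (k + d : ℕ)) / ((k + d : ℕ) + 1) := by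
      rw [one_le_div (by positivity)]; linarith
    have hq := nbPMF_nonneg (r := r) (by linarith) hp0 hp1 (k + d)
    calc p ^ (d + 1) * nbPMF r p k = p * (p ^ d * nbPMF r p k) := by ring
      _ ≤ p * nbPMF r p (k + d) := by gcongr
      _ ≤ p * ((r + (k + d : ℕ)) / ((k + d : ℕ) + 1)) * nbPMF r p (k + d) := by
        rw [mul_assoc]; gcongr; exact le_mul_of_one_le_left hq hratio
      _ = nbPMF r p (k + (d + 1)) := by rw [← nbPMF_succ (by linarith), add_assoc]

theorem nbPMF_succ_le {r p : ℝ} (hr : 0 < r) (hp0 : 0 ≤ p) (hp1 : p ≤ 1) (j : ℕ) :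
    nbPMF r p (j + 1) ≤ Real.exp ((r - 1) / (j + 1)) * nbPMF r p j := by
  have hratio : (r + j) / (j + 1) = (r - 1) / (j + 1) + 1 := by field_simp; ring
  rw [nbPMF_succ hr]
  gcongr
  · exact nbPMF_nonneg hr hp0 hp1 j
  · calc p * ((r + j) / (j + 1)) ≤ (r + j) / (j + 1) := mul_le_of_le_one_left (by positivity) hp1
      _ ≤ _ := hratio ▸ Real.add_one_le_exp _

theorem nbPMF_add_le {r p : ℝ} (hr : 1 ≤ r) (hp0 : 0 ≤ p) (hp1 : p ≤ 1) (k d : ℕ) :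
    nbPMF r p (k + d) ≤ Real.exp (d * (r - 1) / (k + 1)) * nbPMF r p k := by
  induction d with
  | zero => simp
  | succ d ih =>
    have hstep : (r - 1) / ((k + d : ℕ) + 1) ≤ (r - 1) / (k + 1) := by
      gcongr
      linarith
    calc nbPMF r p (k + (d + 1)) ≤ Real.exp ((r - 1) / ((k + d : ℕ) + 1)) * nbPMF r p (k + d) :=
          nbPMF_succ_le (by linarith) hp0 hp1 (k + d)
      _ ≤ Real.exp ((r - 1) / (k + 1)) * (Real.exp (d * (r - 1) / (k + 1)) * nbPMF r p k) := by
          gcongr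
          exact nbPMF_nonneg (by linarith) hp0 hp1 _
      _ = Real.exp ((d + 1 : ℕ) * (r - 1) / (k + 1)) * nbPMF r p k := by
          rw [← mul_assoc, ← Real.exp_add]; push_cast; ring_nf

theorem nbPMF_eq_mul_nbPMF {r p q : ℝ} (hp1 : p ≤ 1) (hq0 : q ≠ 0) (hq1 : q < 1) (k : ℕ) :
    nbPMF r p k = (p / q) ^ k * ((1 - p) / (1 - q)) ^ r * nbPMF r q k := by
  have h1q : 0 < 1 - q := by linarith
  simp only [nbPMF, Real.rpow_eq_pow]
  rw [Real.div_rpow (by linarith) h1q.le]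
  have := (Real.rpow_pos_of_pos h1q r).ne'
  have := pow_ne_zero k hq0
  rw [div_pow]
  field_simp

theorem sum_range_nbPMF_le_of_le {r p q : ℝ} (hr : 0 < r) (hq0 : 0 < q) (hqp : q ≤ p)
    (hp1 : p < 1) (n : ℕ) :
    ∑ k ∈ range n, nbPMF r p k ≤ (p / q) ^ n * ((1 - p) / (1 - q)) ^ r := by
  have hpq : 1 ≤ p / q := (one_le_div hq0).2 hqp
  have hC : 0 ≤ ((1 - p) / (1 - q)) ^ r :=
    Real.rpow_nonneg (div_nonneg (by linarith) (by linarith)) r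
  have hmass : ∑ k ∈ range n, nbPMF r q k ≤ 1 :=
    sum_le_hasSum _ (fun k _ => nbPMF_nonneg hr hq0.le (by linarith) k)
      (hasSum_nbPMF hr (abs_lt.2 ⟨by linarith, by linarith⟩))
  calc ∑ k ∈ range n, nbPMF r p k
      = ∑ k ∈ range n, (p / q) ^ k * ((1 - p) / (1 - q)) ^ r * nbPMF r q k :=
        sum_congr rfl fun k _ => nbPMF_eq_mul_nbPMF hp1.le hq0.ne' (by linarith) k
    _ ≤ ∑ k ∈ range n, (p / q) ^ n * ((1 - p) / (1 - q)) ^ r * nbPMF r q k := by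
        gcongr with k hk
        · exact nbPMF_nonneg hr hq0.le (by linarith) k
        · exact (mem_range.1 hk).le
    _ = (p / q) ^ n * ((1 - p) / (1 - q)) ^ r * ∑ k ∈ range n, nbPMF r q k := by
        rw [mul_sum]
    _ ≤ (p / q) ^ n * ((1 - p) / (1 - q)) ^ r := mul_le_of_le_one_right (by positivity) hmass

theorem ENNReal.tsum_pi_prod {ι α : Type*} [Fintype ι] (f : ι → α → ℝ≥0∞) :
    ∑' v : ι → α, ∏ i, f i (v i) = ∏ i, ∑' a, f i a := by
  revert f
  refine Fintype.induction_empty_option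
    (P := fun ι _ => ∀ f : ι → α → ℝ≥0∞, ∑' v : ι → α, ∏ i, f i (v i) = ∏ i, ∑' a, f i a)
    ?_ ?_ ?_ ι
  · intro ι ι' _ e ih f
    let _ : Fintype ι := Fintype.ofEquiv ι' e.symm
    rw [← (e.arrowCongr (Equiv.refl α)).tsum_eq]
    have := ih (fun j => f (e j))
    convert this using 1
    · exact tsum_congr fun w => (Fintype.prod_equiv e _ _ (fun j => by simp)).symm
    · exact (Fintype.prod_equiv e _ _ (fun j => rfl)).symm
  · intro f
    simp
  · intro ι _ ih f
    rw [← (Equiv.piOptionEquivProd (β := fun _ => α)).symm.tsum_eq, ENNReal.tsum_prod',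
      Fintype.prod_option, ← ENNReal.tsum_mul_right]
    refine tsum_congr fun a => ?_
    rw [← ih, ← ENNReal.tsum_mul_left]
    refine tsum_congr fun w => ?_
    simp [Fintype.prod_option]

theorem ENNReal.tsum_indicator_prod_le {ι α : Type*} [Fintype ι] [DecidableEq ι]
    (f : ι → α → ℝ≥0∞) (hf : ∀ i, ∑' a, f i a ≤ 1) (j : ι) (A : Set α) {d : ℝ≥0∞}
    (hA : ∑' a, A.indicator (f j) a ≤ d) :
    ∑' v : ι → α, {v | v j ∈ A}.indicator (fun v => ∏ i, f i (v i)) v ≤ d := by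
  have hfactor : ∀ v : ι → α, {v | v j ∈ A}.indicator (fun v => ∏ i, f i (v i)) v =
      ∏ i, Function.update f j (A.indicator (f j)) i (v i) := by
    intro v
    by_cases hv : v j ∈ A
    · rw [Set.indicator_of_mem (show v ∈ {v | v j ∈ A} from hv)]
      refine prod_congr rfl fun i _ => ?_
      rcases eq_or_ne i j with rfl | hij
      · simp [Set.indicator_of_mem hv]
      · simp [hij]
    · rw [Set.indicator_of_notMem (show v ∉ {v | v j ∈ A} from hv)]
      exact (prod_eq_zero (mem_univ j) (by simp [Set.indicator_of_notMem hv])).symm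
  calc ∑' v : ι → α, {v | v j ∈ A}.indicator (fun v => ∏ i, f i (v i)) v
      = ∏ i, ∑' a, Function.update f j (A.indicator (f j)) i a := by
        simp only [hfactor, ENNReal.tsum_pi_prod]
    _ ≤ ∏ i, Function.update (fun _ => 1) j d i := by
        refine prod_le_prod' fun i _ => ?_
        rcases eq_or_ne i j with rfl | hij
        · simpa using hA
        · simpa [hij] using hf i
    _ = d := by simp [prod_update_of_mem (mem_univ j)]

theorem prod_le_mul_mul_prod {ι M : Type*} [Fintype ι] [DecidableEq ι] [CommMonoid M]
    [PartialOrder M] [IsOrderedMonoid M] {f g : ι → M} {b b' : ι} (hbb : b ≠ b') {x y : M}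
    (hb : f b ≤ x * g b) (hb' : f b' ≤ y * g b') (hrest : ∀ c, c ≠ b → c ≠ b' → f c ≤ g c) :
    ∏ c, f c ≤ x * y * ∏ c, g c := by
  have hb'mem : b' ∈ univ.erase b := mem_erase.2 ⟨hbb.symm, mem_univ b'⟩
  rw [← mul_prod_erase univ f (mem_univ b), ← mul_prod_erase _ f hb'mem,
    ← mul_prod_erase univ g (mem_univ b), ← mul_prod_erase _ g hb'mem]
  calc f b * (f b' * ∏ c ∈ (univ.erase b).erase b', f c)
      ≤ x * g b * (y * g b' * ∏ c ∈ (univ.erase b).erase b', g c) := by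
        gcongr with c hc
        obtain ⟨hcb', hc⟩ := mem_erase.1 hc
        exact hrest c (mem_erase.1 hc).1 hcb'
    _ = x * y * (g b * (g b' * ∏ c ∈ (univ.erase b).erase b', g c)) := by
        ac_rfl

theorem setProb_le_mul_add_of_le_mul_outside {Ω : Type*} {ν ν' : Ω → ℝ≥0∞} (B : Set Ω)
    {c d : ℝ≥0∞} (hgood : ∀ x ∉ B, ν x ≤ c * ν' x) (hbad : ∑' x, B.indicator ν x ≤ d)
    (S : Set Ω) : setProb ν S ≤ c * setProb ν' S + d := by
  have hsplit : ∀ x, ν x ≤ c * ν' x + B.indicator ν x := by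
    intro x
    by_cases hx : x ∈ B
    · simp [Set.indicator_of_mem hx]
    · exact (hgood x hx).trans le_self_add
  calc setProb ν S ≤ ∑' x : S, (c * ν' x + B.indicator ν x) :=
        ENNReal.tsum_le_tsum fun x => hsplit x
    _ = c * setProb ν' S + ∑' x : S, B.indicator ν x := by
        rw [ENNReal.tsum_add, ENNReal.tsum_mul_left, setProb]
    _ ≤ c * setProb ν' S + d := by
        gcongr
        exact (ENNReal.tsum_comp_le_tsum_of_injective Subtype.coe_injective _).trans hbad

theorem tsum_nat_add_eq_tsum_of_eq_zero {α : Type*} [AddCommMonoid α] [TopologicalSpace α]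
    {f : ℕ → α} (a : ℕ) (hf : ∀ x < a, f x = 0) : ∑' k, f (k + a) = ∑' x, f x := by
  refine (add_left_injective a).tsum_eq fun x hx => ?_
  have : a ≤ x := not_lt.1 fun hxa => hx (hf x hxa)
  exact ⟨x - a, Nat.sub_add_cancel this⟩

/-- The law of `a + Z` for `Z` with mass function `q`; `noisyHist K r p R` is definitionally
`fun v ↦ ∏ c, shiftMass (fun k ↦ ENNReal.ofReal (nbPMF r p k)) (R c) (v c)`. -/
def shiftMass (q : ℕ → ℝ≥0∞) (a x : ℕ) : ℝ≥0∞ :=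
  if a ≤ x then q (x - a) else 0

theorem shiftMass_add_le {q : ℕ → ℝ≥0∞} {A : ℝ≥0∞} {d : ℕ} (h : ∀ k, q k ≤ A * q (k + d))
    (a x : ℕ) :
    shiftMass q (a + d) x ≤ A * shiftMass q a x := by
  unfold shiftMass
  split_ifs with hx hx'
  · convert h (x - (a + d)) using 3
    omega
  · omega
  · exact zero_le
  · exact zero_le

theorem shiftMass_le_add {q : ℕ → ℝ≥0∞} {B : ℝ≥0∞} {d k₀ : ℕ}
    (h : ∀ k, k₀ ≤ k → q (k + d) ≤ B * q k) {a x : ℕ} (hx : a + d + k₀ ≤ x) : shiftMass q a x ≤ B * shiftMass q (a + d) x := by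
  rw [shiftMass, shiftMass, if_pos (by omega), if_pos (by omega)]
  convert h (x - (a + d)) (by omega) using 2
  omega

theorem shiftMass_eq_zero_of_lt {q : ℕ → ℝ≥0∞} {a x : ℕ} (hx : x < a) : shiftMass q a x = 0 :=
  if_neg (by omega)

theorem shiftMass_add_self (q : ℕ → ℝ≥0∞) (a k : ℕ) : shiftMass q a (k + a) = q k := by
  simp [shiftMass]

theorem tsum_shiftMass (q : ℕ → ℝ≥0∞) (a : ℕ) : ∑' x, shiftMass q a x = ∑' k, q k := by
  simp only [← tsum_nat_add_eq_tsum_of_eq_zero a fun x => shiftMass_eq_zero_of_lt,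
    shiftMass_add_self]

theorem tsum_indicator_Iio_shiftMass (q : ℕ → ℝ≥0∞) (a n : ℕ) :
    ∑' x, (Set.Iio (a + n)).indicator (shiftMass q a) x = ∑ k ∈ range n, q k := by
  rw [← tsum_nat_add_eq_tsum_of_eq_zero a fun x hx =>
    Set.indicator_apply_eq_zero.2 fun _ => shiftMass_eq_zero_of_lt hx]
  rw [tsum_eq_sum (s := range n) fun k hk =>
    Set.indicator_of_notMem (by simp at hk ⊢; omega) _]
  refine sum_congr rfl fun k hk => ?_
  rw [Set.indicator_of_mem (by simp at hk ⊢; omega), shiftMass_add_self]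

theorem setProb_prod_shiftMass_le {ι : Type*} [Fintype ι] [DecidableEq ι] {q : ℕ → ℝ≥0∞}
    (hq : ∑' k, q k ≤ 1) {Δ k₀ : ℕ} {A B d : ℝ≥0∞} (hup : ∀ k, q k ≤ A * q (k + Δ))
    (hdown : ∀ k, k₀ ≤ k → q (k + Δ) ≤ B * q k) (htail : ∑ k ∈ range (Δ + k₀), q k ≤ d)
    {R R' : ι → ℕ} {b b' : ι} (hbb : b ≠ b') (hb : R b = R' b + Δ) (hb' : R' b' = R b' + Δ)
    (hrest : ∀ c, c ≠ b → c ≠ b' → R c = R' c) (S : Set (ι → ℕ)) :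
    setProb (fun v => ∏ c, shiftMass q (R c) (v c)) S ≤
      A * B * setProb (fun v => ∏ c, shiftMass q (R' c) (v c)) S + d := by
  refine setProb_le_mul_add_of_le_mul_outside {v | v b' ∈ Set.Iio (R b' + (Δ + k₀))}
    (fun v hv => ?_) ?_ S
  · refine prod_le_mul_mul_prod hbb ?_ ?_ fun c hcb hcb' => (hrest c hcb hcb' ▸ le_rfl)
    · rw [hb]
      exact shiftMass_add_le hup _ _
    · rw [hb']
      exact shiftMass_le_add hdown (by simp at hv; omega)
  · refine ENNReal.tsum_indicator_prod_le _ (fun c => (tsum_shiftMass q (R c)).trans_le hq) b' _ ?_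
    rwa [tsum_indicator_Iio_shiftMass]

theorem nbPMF_le_exp_mul_nbPMF_add {r t : ℝ} {Δ : ℕ} (hr : 1 ≤ r) (hΔ : Δ ≠ 0) (ht : 0 ≤ t)
    (k : ℕ) :
    nbPMF r (Real.exp (-(t / Δ))) k ≤ Real.exp t * nbPMF r (Real.exp (-(t / Δ))) (k + Δ) := by
  have hpΔ : Real.exp (-(t / Δ)) ^ Δ = Real.exp (-t) := by
    rw [← Real.exp_nat_mul]; field_simp
  have hp1 : Real.exp (-(t / Δ)) ≤ 1 := Real.exp_le_one_iff.2 (by simp; positivity)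
  calc nbPMF r (Real.exp (-(t / Δ))) k
      = Real.exp t * (Real.exp (-(t / Δ)) ^ Δ * nbPMF r (Real.exp (-(t / Δ))) k) := by
        rw [hpΔ, ← mul_assoc, ← Real.exp_add, add_neg_cancel, Real.exp_zero, one_mul]
    _ ≤ Real.exp t * nbPMF r (Real.exp (-(t / Δ))) (k + Δ) := by
        gcongr
        exact pow_mul_nbPMF_le_nbPMF_add hr (Real.exp_pos _).le hp1 k Δ

theorem nbPMF_add_le_exp_mul_of_ceil_le {r p ε : ℝ} {Δ k : ℕ} (hr : 1 ≤ r) (hp0 : 0 ≤ p)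
    (hp1 : p ≤ 1) (hε : 0 < ε) (hk : ⌈Δ * r / ε⌉₊ ≤ k) :
    nbPMF r p (k + Δ) ≤ Real.exp ε * nbPMF r p k := by
  have hk' : Δ * r < ε * (k + 1) := by
    rw [← div_lt_iff₀' hε]
    exact (Nat.ceil_le.1 hk).trans_lt (lt_add_one _)
  refine (nbPMF_add_le hr hp0 hp1 k Δ).trans ?_
  gcongr
  · exact nbPMF_nonneg (by linarith) hp0 hp1 k
  · rw [div_le_iff₀ (by positivity)]
    nlinarith [(Δ.cast_nonneg : (0 : ℝ) ≤ Δ)]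

theorem Real.exp_three_div_four_le : Real.exp (3 / 4) ≤ 2.44 := by
  refine le_of_pow_le_pow_left₀ four_ne_zero (by norm_num) ?_
  rw [← Real.exp_nat_mul, show ((4 : ℕ) : ℝ) * (3 / 4) = 3 by norm_num,
    show (3 : ℝ) = (3 : ℕ) * 1 by norm_num, Real.exp_nat_mul]
  calc Real.exp 1 ^ 3 ≤ 3 ^ 3 := by gcongr; exact Real.exp_one_lt_three.le
    _ ≤ 2.44 ^ 4 := by norm_num

theorem one_le_three_mul_one_add_log_one_div {δ : ℝ} (hδ0 : 0 < δ) (hδ1 : δ ≤ 1) :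
    1 ≤ 3 * (1 + Real.log (1 / δ)) := by
  linarith [Real.log_nonneg ((one_le_div hδ0).2 hδ1)]

theorem sum_range_nbPMF_le_delta {ε δ p r : ℝ} {Δ : ℕ} (hε0 : 0 < ε) (hε1 : ε < 1)
    (hδ0 : 0 < δ) (hδ1 : δ < 1) (hΔ : 1 ≤ Δ) (hp : p = Real.exp (-(0.2 * ε / Δ)))
    (hr : r = 3 * (1 + Real.log (1 / δ))) :
    ∑ k ∈ range (Δ + ⌈Δ * r / ε⌉₊), nbPMF r p k ≤ δ := by
  set t := 0.2 * ε / Δ with ht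
  set n := Δ + ⌈Δ * r / ε⌉₊ with hn
  have hΔ' : (1 : ℝ) ≤ Δ := by exact_mod_cast hΔ
  have ht0 : 0 < t := by positivity
  have ht1 : t ≤ 0.2 := by rw [ht, div_le_iff₀ (by linarith)]; nlinarith
  have hr1 : 1 ≤ r := hr ▸ one_le_three_mul_one_add_log_one_div hδ0 hδ1.le
  have hp0 : 0 < p := hp ▸ Real.exp_pos _
  have hp1 : p < 1 := by rw [hp, Real.exp_lt_one_iff]; linarith
  have hp08 : 0.8 ≤ p := by linarith [hp ▸ Real.add_one_le_exp (-t)]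
  have hchernoff := sum_range_nbPMF_le_of_le (r := r) (q := p ^ 3) (by linarith) (pow_pos hp0 3)
    (pow_le_of_le_one hp0.le hp1.le (by norm_num)) hp1 n
  have hgrowth : (p / p ^ 3) ^ n ≤ Real.exp (0.8 + 0.4 * r) := by
    have hceil : (⌈Δ * r / ε⌉₊ : ℝ) < Δ * r / ε + 1 := Nat.ceil_lt_add_one (by positivity)
    rw [hp, ← Real.exp_nat_mul, ← Real.exp_sub, ← Real.exp_nat_mul, Real.exp_le_exp, hn]
    push_cast
    have htΔ : t * Δ = 0.2 * ε := by rw [ht]; field_simp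
    have htr : t * (Δ * r / ε) = 0.2 * r := by rw [ht]; field_simp
    nlinarith [mul_lt_mul_of_pos_left hceil ht0]
  have hfac : (1 - p) / (1 - p ^ 3) = (1 + p + p ^ 2)⁻¹ := by
    rw [show 1 - p ^ 3 = (1 - p) * (1 + p + p ^ 2) by ring, div_mul_eq_div_div,
      div_self (by linarith), one_div]
  have hdecay : ((1 + p + p ^ 2)⁻¹) ^ r ≤ Real.exp (-(3 / 4 * r)) := by
    rw [Real.inv_rpow (by positivity), Real.exp_neg, Real.exp_mul]
    refine inv_anti₀ (by positivity) (Real.rpow_le_rpow (Real.exp_pos _).le ?_ (by linarith))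
    exact Real.exp_three_div_four_le.trans (by nlinarith)
  calc ∑ k ∈ range n, nbPMF r p k ≤ (p / p ^ 3) ^ n * ((1 + p + p ^ 2)⁻¹) ^ r := hfac ▸ hchernoff
    _ ≤ Real.exp (0.8 + 0.4 * r) * Real.exp (-(3 / 4 * r)) := by gcongr
    _ ≤ Real.exp (Real.log δ) := by
        rw [← Real.exp_add, Real.exp_le_exp, hr, one_div, Real.log_inv]
        linarith [Real.log_nonpos hδ0.le hδ1.le]
    _ = δ := Real.exp_log hδ0

theorem setProb_noisyHist_le {K : ℕ} {ε δ p r : ℝ} {Δ : ℕ} (hε0 : 0 < ε) (hε1 : ε < 1)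
    (hδ0 : 0 < δ) (hδ1 : δ < 1) (hΔ : 1 ≤ Δ) (hp : p = Real.exp (-(0.2 * ε / Δ)))
    (hr : r = 3 * (1 + Real.log (1 / δ))) {R R' : Fin K → ℕ} {b b' : Fin K} (hbb : b ≠ b')
    (hb : R b = R' b + Δ) (hb' : R' b' = R b' + Δ) (hrest : ∀ c, c ≠ b → c ≠ b' → R c = R' c)
    (S : Set (Fin K → ℕ)) :
    setProb (noisyHist K r p R) S ≤
      ENNReal.ofReal (Real.exp (0.2 * ε)) * ENNReal.ofReal (Real.exp ε) *
        setProb (noisyHist K r p R') S + ENNReal.ofReal δ := by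
  have hr1 : 1 ≤ r := hr ▸ one_le_three_mul_one_add_log_one_div hδ0 hδ1.le
  have hp0 : 0 < p := hp ▸ Real.exp_pos _
  have hp1 : p < 1 := by rw [hp, Real.exp_lt_one_iff, neg_lt_zero]; positivity
  have hnonneg := nbPMF_nonneg (r := r) (by linarith) hp0.le hp1.le
  refine setProb_prod_shiftMass_le (q := fun k => ENNReal.ofReal (nbPMF r p k))
    (k₀ := ⌈Δ * r / ε⌉₊) ?_ ?_ ?_ ?_ hbb hb hb' hrest S
  · have hsum := hasSum_nbPMF (r := r) (by linarith) (abs_lt.2 ⟨by linarith, hp1⟩)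
    rw [← ENNReal.ofReal_tsum_of_nonneg hnonneg hsum.summable, hsum.tsum_eq, ENNReal.ofReal_one]
  · intro k
    rw [← ENNReal.ofReal_mul (Real.exp_pos _).le]
    exact ENNReal.ofReal_le_ofReal
      (hp ▸ nbPMF_le_exp_mul_nbPMF_add hr1 (by omega) (by positivity) k)
  · intro k hk
    rw [← ENNReal.ofReal_mul (Real.exp_pos _).le]
    exact ENNReal.ofReal_le_ofReal
      (nbPMF_add_le_exp_mul_of_ceil_le hr1 hp0.le hp1.le hε0 hk)
  · rw [← ENNReal.ofReal_sum_of_nonneg fun k _ => hnonneg k]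
    exact ENNReal.ofReal_le_ofReal (sum_range_nbPMF_le_delta hε0 hε1 hδ0 hδ1 hΔ hp hr)

theorem noisy_histogram_dp_simple_case_general
    (K : ℕ)
    (ε δ : ℝ) (hε : ε ∈ Set.Ioo (0 : ℝ) 1) (hδ : δ ∈ Set.Ioo (0 : ℝ) 1)
    (Δ : ℕ) (hΔ : 1 ≤ Δ)
    (p r : ℝ)
    (hp : p = Real.exp (-(0.2 * ε / (Δ : ℝ))))
    (hr : r = 3 * (1 + Real.log (1 / δ)))
    (R R' : Fin K → ℕ)
    (b b' : Fin K) (hbb : b ≠ b')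
    (hb : R b = R' b + Δ)
    (hb' : R' b' = R b' + Δ)
    (hrest : ∀ c, c ≠ b → c ≠ b' → R c = R' c) :
    ∀ S : Set (Fin K → ℕ),
      setProb (noisyHist K r p R) S ≤
        ENNReal.ofReal (Real.exp (2 * ε)) * setProb (noisyHist K r p R') S +
          ENNReal.ofReal (2 * δ) ∧
      setProb (noisyHist K r p R') S ≤
        ENNReal.ofReal (Real.exp (2 * ε)) * setProb (noisyHist K r p R) S +
          ENNReal.ofReal (2 * δ) := by
  intro S
  obtain ⟨hε0, hε1⟩ := hε
  obtain ⟨hδ0, hδ1⟩ := hδ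
  have hA : ENNReal.ofReal (Real.exp (0.2 * ε)) * ENNReal.ofReal (Real.exp ε) ≤
      ENNReal.ofReal (Real.exp (2 * ε)) := by
    rw [← ENNReal.ofReal_mul (Real.exp_pos _).le, ← Real.exp_add]
    gcongr
    linarith
  have hd : ENNReal.ofReal δ ≤ ENNReal.ofReal (2 * δ) := by gcongr; linarith
  constructor
  · refine (setProb_noisyHist_le hε0 hε1 hδ0 hδ1 hΔ hp hr hbb hb hb' hrest S).trans ?_
    gcongr
  · refine (setProb_noisyHist_le hε0 hε1 hδ0 hδ1 hΔ hp hr hbb.symm hb' hb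
      (fun c hcb' hcb => (hrest c hcb hcb').symm) S).trans ?_
    gcongr

/-- Simple case of the DP analysis: for `K ≥ 2` clusters, `ε, δ ∈ (0,1)`, `Δ ≥ 1`,
`p = e^{−0.2ε/Δ}`, `r = 3(1 + log(1/δ))`, if two histograms `R, R'` agree everywhere
except on two distinct clusters `b ≠ b'` with `R_b = R'_b + Δ` and `R'_{b'} = R_{b'} + Δ`
(one client moves all `Δ` of its queries from cluster `b` to cluster `b'`), then the
noisy-histogram mechanism is `(2ε, 2δ)`-differentially private w.r.t. `(R, R')`. -/
theorem noisy_histogram_dp_simple_case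
    (K : ℕ) (hK : 2 ≤ K)
    (ε δ : ℝ) (hε : ε ∈ Set.Ioo (0 : ℝ) 1) (hδ : δ ∈ Set.Ioo (0 : ℝ) 1)
    (Δ : ℕ) (hΔ : 1 ≤ Δ)
    (p r : ℝ)
    (hp : p = Real.exp (-(0.2 * ε / (Δ : ℝ))))
    (hr : r = 3 * (1 + Real.log (1 / δ)))
    (R R' : Fin K → ℕ)
    (b b' : Fin K) (hbb : b ≠ b')
    (hb : R b = R' b + Δ)
    (hb' : R' b' = R b' + Δ)
    (hrest : ∀ c, c ≠ b → c ≠ b' → R c = R' c) :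
    ∀ S : Set (Fin K → ℕ),
      setProb (noisyHist K r p R) S ≤
        ENNReal.ofReal (Real.exp (2 * ε)) * setProb (noisyHist K r p R') S +
          ENNReal.ofReal (2 * δ) ∧
      setProb (noisyHist K r p R') S ≤
        ENNReal.ofReal (Real.exp (2 * ε)) * setProb (noisyHist K r p R) S +
          ENNReal.ofReal (2 * δ) :=
  noisy_histogram_dp_simple_case_general K ε δ hε hδ Δ hΔ p r hp hr R R' b b' hbb hb hb' hrest
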